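/- For every Borel probability measure μ on X that is invariant under the left shift T, every k ∈ ℕ, and every 0 ≤ i < 2^k, one has μ(u_k(i)) = μ(ū_k(i)) = 2^{−(k+1)}; i.e., all 2^{k+1} k-canonical cylinders have equal measure 2^{−(k+1)}. -/

import Mathlib

/-!
At every level `k`, a point of `X` is a concatenation of blocks `u_k` and `ū_k` (pigeonhole on
the positions of longer and longer windows inside the Morse sequence), and the phase of this
block structure is unique: if two phases at level `k + 1` differed by `2 ^ k`, consecutive
`k`-blocks would alternate in colour, so `x` would have period `2 ^ (k + 1)`, which no long
Morse word has. Hence the `2 ^ (k + 1)` canonical cylinders of level `k` partition `X`.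
The shift pulls `u_k(i + 1)` back to `u_k(i)`, so cylinders of one colour have equal measure,
and the splittings `u_k(0) = u_{k+1}(0) ⊔ ū_{k+1}(2 ^ k)` and
`ū_k(0) = ū_{k+1}(0) ⊔ u_{k+1}(2 ^ k)` show that both colours have the same measure.
-/

/-- The substitution σ on symbols: σ(0) = 01, σ(1) = 10 (with 0 ↔ `false`, 1 ↔ `true`). -/
def sigmaSub (b : Bool) : List Bool := [b, !b]

/-- The substitution σ extended to words by concatenation. -/
def subst (w : List Bool) : List Bool := w.flatMap sigmaSub

/-- The flip of a binary word: exchange 0 and 1 in every position. -/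
def flipWord (w : List Bool) : List Bool := w.map (fun b => !b)

/-- u_k = σ^k(0). -/
def uWord : ℕ → List Bool
  | 0 => [false]
  | k + 1 => subst (uWord k)

/-- The Morse sequence: its first 2^k symbols form the word u_k for every k. -/
def morse (n : ℕ) : Bool := (uWord (n + 1)).getD n false

/-- The subword of `x` on the interval `[p, p + w.length)` is the word `w`. -/
def readsWord (x : ℤ → Bool) (p : ℤ) (w : List Bool) : Prop :=
  ∀ j : ℕ, j < w.length → x (p + j) = w.getD j false

/-- The Morse minimal set X: bi-infinite sequences all of whose finite subwords
occur in the Morse sequence. -/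
def morseShiftX : Set (ℤ → Bool) :=
  {x | ∀ (a : ℤ) (l : ℕ), ∃ s : ℕ, ∀ j : ℕ, j < l → x (a + j) = morse (s + j)}

/-- The left shift T. -/
def shiftT (x : ℤ → Bool) : ℤ → Bool := fun i => x (i + 1)

/-- `hasOffset k x i`: coordinate 0 occupies position `i` in its interval, i.e. on every
interval `[-i + m·2^k, -i + (m+1)·2^k)` the sequence `x` reads u_k or its flip. -/
def hasOffset (k : ℕ) (x : ℤ → Bool) (i : ℕ) : Prop :=
  ∀ m : ℤ, readsWord x (-(i : ℤ) + m * 2 ^ k) (uWord k) ∨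
    readsWord x (-(i : ℤ) + m * 2 ^ k) (flipWord (uWord k))

/-- The k-canonical cylinders: `cyl k false i` is u_k(i), `cyl k true i` is ū_k(i). -/
def cyl (k : ℕ) (b : Bool) (i : ℕ) : Set {x : ℤ → Bool // x ∈ morseShiftX} :=
  {x | hasOffset k x.val i ∧
    x.val 0 = (if b then flipWord (uWord k) else uWord k).getD i false}

lemma length_subst (w : List Bool) : (subst w).length = 2 * w.length := by
  simp [subst, sigmaSub, List.length_flatMap, mul_comm]

lemma getD_subst_two_mul (w : List Bool) (j : ℕ) :
    (subst w).getD (2 * j) false = w.getD j false := by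
  induction w generalizing j with
  | nil => simp [subst]
  | cons b w ih =>
    cases j with
    | zero => rfl
    | succ j => simpa [subst, sigmaSub, Nat.mul_succ] using ih j

lemma getD_subst_two_mul_add_one (w : List Bool) {j : ℕ} (hj : j < w.length) :
    (subst w).getD (2 * j + 1) false = !w.getD j false := by
  induction w generalizing j with
  | nil => simp at hj
  | cons b w ih =>
    cases j with
    | zero => rfl
    | succ j => simpa [subst, sigmaSub, Nat.mul_succ] using ih (j := j) (by simpa using hj)

lemma length_uWord (k : ℕ) : (uWord k).length = 2 ^ k := by
  induction k with
  | zero => rfl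
  | succ k ih => rw [uWord, length_subst, ih, pow_succ, mul_comm]

lemma uWord_prefix_uWord_succ (k : ℕ) : uWord k <+: uWord (k + 1) := by
  induction k with
  | zero => exact ⟨[true], rfl⟩
  | succ k ih => exact ih.flatMap sigmaSub

lemma uWord_prefix_of_le {k k' : ℕ} (h : k ≤ k') : uWord k <+: uWord k' := by
  induction k', h using Nat.le_induction with
  | base => exact List.prefix_refl _
  | succ k' _ ih => exact ih.trans (uWord_prefix_uWord_succ k')

lemma List.IsPrefix.getD_eq {α : Type*} {l₁ l₂ : List α} (h : l₁ <+: l₂) {j : ℕ}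
    (hj : j < l₁.length) (d : α) : l₂.getD j d = l₁.getD j d := by
  simp [List.getD_eq_getElem?_getD, List.prefix_iff_getElem?.1 h j hj, hj]

lemma getD_uWord {k j : ℕ} (hj : j < 2 ^ k) : (uWord k).getD j false = morse j := by
  have hj' : j < 2 ^ (j + 1) := by have := j.lt_two_pow_self; rw [pow_succ]; omega
  rw [morse, ← (uWord_prefix_of_le (le_max_left k (j + 1))).getD_eq (by rwa [length_uWord]),
    ← (uWord_prefix_of_le (le_max_right k (j + 1))).getD_eq (by rwa [length_uWord])]

lemma getD_flipWord (w : List Bool) {j : ℕ} (hj : j < w.length) :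
    (flipWord w).getD j false = !w.getD j false := by
  simp [flipWord, List.getD_eq_getElem?_getD, hj]

lemma morse_zero : morse 0 = false := rfl

lemma morse_one : morse 1 = true := rfl

lemma morse_two_mul (n : ℕ) : morse (2 * n) = morse n := by
  have h : 2 * n < 2 ^ (n + 2) := by
    have := n.lt_two_pow_self; rw [pow_succ, pow_succ]; omega
  rw [← getD_uWord h, uWord, getD_subst_two_mul, morse]

lemma morse_two_mul_add_one (n : ℕ) : morse (2 * n + 1) = !morse n := by
  have h : 2 * n + 1 < 2 ^ (n + 2) := by
    have := n.lt_two_pow_self; rw [pow_succ, pow_succ]; omega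
  have hn : n < (uWord (n + 1)).length := by
    have := n.lt_two_pow_self; rw [length_uWord, pow_succ]; omega
  rw [← getD_uWord h, uWord, getD_subst_two_mul_add_one _ hn, morse]

lemma morse_mul_two_pow_add (n : ℕ) {k j : ℕ} (hj : j < 2 ^ k) :
    morse (n * 2 ^ k + j) = xor (morse n) (morse j) := by
  induction k generalizing j with
  | zero =>
    obtain rfl : j = 0 := by simpa using hj
    simp [morse_zero]
  | succ k ih =>
    obtain ⟨q, rfl | rfl⟩ := j.even_or_odd'
    · rw [show n * 2 ^ (k + 1) + 2 * q = 2 * (n * 2 ^ k + q) by ring, morse_two_mul,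
        morse_two_mul, ih (by rw [pow_succ] at hj; omega)]
    · rw [show n * 2 ^ (k + 1) + (2 * q + 1) = 2 * (n * 2 ^ k + q) + 1 by ring,
        morse_two_mul_add_one, morse_two_mul_add_one, ih (by rw [pow_succ] at hj; omega),
        Bool.xor_not]

lemma morse_two_pow_add {k j : ℕ} (hj : j < 2 ^ k) : morse (2 ^ k + j) = !morse j := by
  simpa [morse_one] using morse_mul_two_pow_add 1 hj

lemma morse_two_mul_add_one_eq_not (n : ℕ) : morse (2 * n + 1) = !morse (2 * n) := by
  rw [morse_two_mul, morse_two_mul_add_one]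

lemma not_morse_three_eq (n : ℕ) :
    ¬(morse (n + 1) = morse n ∧ morse (n + 2) = morse (n + 1)) := by
  rintro ⟨h₁, h₂⟩
  obtain ⟨m, rfl | rfl⟩ := n.even_or_odd'
  · simp [morse_two_mul_add_one_eq_not] at h₁
  · have := morse_two_mul_add_one_eq_not (m + 1)
    rw [show 2 * (m + 1) = 2 * m + 1 + 1 by ring, h₂] at this
    simp at this

lemma exists_morse_add_two_pow_ne (k s : ℕ) :
    ∃ t < 2 ^ (k + 1), morse (s + t + 2 ^ k) ≠ morse (s + t) := by
  induction k generalizing s with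
  | zero =>
    by_contra! h
    exact not_morse_three_eq s ⟨h 0 (by norm_num), h 1 (by norm_num)⟩
  | succ k ih =>
    obtain ⟨t, ht, hne⟩ := ih ((s + 1) / 2)
    refine ⟨2 * ((s + 1) / 2 + t) - s, by rw [pow_succ]; omega, ?_⟩
    rwa [show s + (2 * ((s + 1) / 2 + t) - s) = 2 * ((s + 1) / 2 + t) by omega, pow_succ,
      mul_comm _ 2, ← mul_add, morse_two_mul, morse_two_mul]

/-- On `[p, p + 2 ^ k)`, `x` reads `u_k` if `b = false` and `ū_k` if `b = true`. -/
def ReadsBlock (x : ℤ → Bool) (p : ℤ) (k : ℕ) (b : Bool) : Prop :=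
  ∀ j : ℕ, j < 2 ^ k → x (p + j) = xor b (morse j)

lemma getD_cond_uWord (b : Bool) {k j : ℕ} (hj : j < 2 ^ k) :
    (if b then flipWord (uWord k) else uWord k).getD j false = xor b (morse j) := by
  cases b
  · rw [if_neg Bool.false_ne_true, getD_uWord hj, Bool.false_xor]
  · rw [if_pos rfl, getD_flipWord _ (by rwa [length_uWord]), getD_uWord hj, Bool.true_xor]

lemma readsWord_cond_uWord_iff {x : ℤ → Bool} {p : ℤ} {k : ℕ} (b : Bool) :
    readsWord x p (if b then flipWord (uWord k) else uWord k) ↔ ReadsBlock x p k b := by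
  have hlen : (if b then flipWord (uWord k) else uWord k).length = 2 ^ k := by
    cases b <;> simp [flipWord, length_uWord]
  rw [readsWord, hlen]
  exact forall₂_congr fun j hj => by rw [getD_cond_uWord b hj]

lemma hasOffset_iff {k : ℕ} {x : ℤ → Bool} {i : ℕ} :
    hasOffset k x i ↔ ∀ m : ℤ, ∃ b, ReadsBlock x (-i + m * 2 ^ k) k b := by
  simp only [Bool.exists_bool, ← readsWord_cond_uWord_iff]
  rfl

namespace ReadsBlock

variable {x : ℤ → Bool} {p : ℤ} {k : ℕ} {b : Bool}

lemma apply_eq (h : ReadsBlock x p k b) : x p = b := by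
  simpa [morse_zero] using h 0 (Nat.two_pow_pos k)

lemma mono {k' : ℕ} (h : ReadsBlock x p k' b) (hk : k ≤ k') : ReadsBlock x p k b :=
  fun j hj => h j (hj.trans_le (Nat.pow_le_pow_right two_pos hk))

lemma right_half (h : ReadsBlock x p (k + 1) b) : ReadsBlock x (p + 2 ^ k) k (!b) := by
  intro j hj
  have := h (2 ^ k + j) (by rw [pow_succ]; omega)
  rw [morse_two_pow_add hj, Bool.xor_not] at this
  rw [Bool.not_xor, ← this]
  push_cast
  rw [add_assoc]

end ReadsBlock

lemma readsBlock_shiftT_iff {x : ℤ → Bool} {p : ℤ} {k : ℕ} {b : Bool} :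
    ReadsBlock (shiftT x) p k b ↔ ReadsBlock x (p + 1) k b := by
  simp only [ReadsBlock, shiftT, add_right_comm]

lemma readsBlock_of_eqOn_morse {x : ℤ → Bool} {a : ℤ} {s l : ℕ}
    (hx : ∀ j : ℕ, j < l → x (a + j) = morse (s + j)) {k c n : ℕ}
    (hc : s + c = n * 2 ^ k) (hl : c + 2 ^ k ≤ l) : ReadsBlock x (a + c) k (morse n) := by
  intro j hj
  rw [add_assoc, ← Nat.cast_add, hx _ (by omega), ← add_assoc, hc, morse_mul_two_pow_add n hj]

lemma eq_mod_or_eq_mod_add_of_lt_two_mul {n i : ℕ} (h : i < 2 * n) :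
    i = i % n ∨ i = i % n + n := by
  rcases lt_or_ge i n with hi | hi
  · exact .inl (Nat.mod_eq_of_lt hi).symm
  · right
    rw [Nat.mod_eq_sub_mod hi, Nat.mod_eq_of_lt (by omega)]
    omega

section Offset

variable {x : ℤ → Bool} {k : ℕ}

lemma hasOffset_add_mul_two_pow {i : ℕ} (n : ℕ) :
    hasOffset k x (i + n * 2 ^ k) ↔ hasOffset k x i := by
  have e : ∀ m : ℤ, -((i + n * 2 ^ k : ℕ) : ℤ) + m * 2 ^ k = -i + (m - n) * 2 ^ k := by
    intro m; push_cast; ring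
  simp only [hasOffset_iff, e]
  exact ⟨fun h m => by simpa using h (m + n), fun h m => h (m - n)⟩

lemma hasOffset_mod_two_pow {i : ℕ} : hasOffset k x (i % 2 ^ k) ↔ hasOffset k x i := by
  conv_rhs => rw [← Nat.mod_add_div' i (2 ^ k)]
  exact (hasOffset_add_mul_two_pow _).symm

lemma hasOffset_of_hasOffset_succ {i : ℕ} (h : hasOffset (k + 1) x i) : hasOffset k x i := by
  rw [hasOffset_iff] at h ⊢
  intro m
  obtain ⟨q, rfl | rfl⟩ := m.even_or_odd'
  · obtain ⟨b, hb⟩ := h q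
    refine ⟨b, ?_⟩
    rw [show -(i : ℤ) + 2 * q * 2 ^ k = -i + q * 2 ^ (k + 1) by ring]
    exact hb.mono k.le_succ
  · obtain ⟨b, hb⟩ := h q
    refine ⟨!b, ?_⟩
    rw [show -(i : ℤ) + (2 * q + 1) * 2 ^ k = -i + q * 2 ^ (k + 1) + 2 ^ k by ring]
    exact hb.right_half

lemma hasOffset_shiftT_iff {i : ℕ} : hasOffset k (shiftT x) (i + 1) ↔ hasOffset k x i := by
  have e : ∀ m : ℤ, -((i + 1 : ℕ) : ℤ) + m * 2 ^ k + 1 = -i + m * 2 ^ k := by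
    intro m; push_cast; ring
  simp only [hasOffset_iff, readsBlock_shiftT_iff, e]

lemma apply_add_two_pow_of_hasOffset_succ {i : ℕ} (h : hasOffset (k + 1) x i) (m : ℤ) :
    x (-i + m * 2 ^ (k + 1) + 2 ^ k) = !x (-i + m * 2 ^ (k + 1)) := by
  obtain ⟨b, hb⟩ := hasOffset_iff.1 h m
  rw [hb.right_half.apply_eq, hb.apply_eq]

lemma periodic_of_hasOffset_of_alternating {r : ℕ} (h : hasOffset k x r)
    (halt : ∀ n : ℤ, x (-r + (n + 1) * 2 ^ k) = !x (-r + n * 2 ^ k)) :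
    Function.Periodic x (2 ^ (k + 1)) := by
  intro p
  have hP : (0 : ℤ) < 2 ^ k := by positivity
  obtain ⟨n, j, hj, rfl⟩ : ∃ n : ℤ, ∃ j : ℕ, j < 2 ^ k ∧ p = -r + n * 2 ^ k + j := by
    obtain ⟨j, hj⟩ := Int.eq_ofNat_of_zero_le (Int.emod_nonneg (p + r) hP.ne')
    refine ⟨(p + r) / 2 ^ k, j, by exact_mod_cast hj ▸ Int.emod_lt_of_pos (p + r) hP, ?_⟩
    linarith [Int.emod_add_ediv_mul (p + r) (2 ^ k)]
  obtain ⟨b, hb⟩ := hasOffset_iff.1 h n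
  obtain ⟨b', hb'⟩ := hasOffset_iff.1 h (n + 2)
  have hbb' : b' = b := by
    rw [← hb.apply_eq, ← hb'.apply_eq, show n + 2 = n + 1 + 1 by ring, halt, halt, Bool.not_not]
  calc x (-r + n * 2 ^ k + j + 2 ^ (k + 1)) = x (-r + (n + 2) * 2 ^ k + j) := by
        congr 1; ring
    _ = x (-r + n * 2 ^ k + j) := by rw [hb' j hj, hb j hj, hbb']

lemma periodic_of_hasOffset_succ_of_hasOffset_succ_add {r : ℕ} (h₁ : hasOffset (k + 1) x r)
    (h₂ : hasOffset (k + 1) x (r + 2 ^ k)) : Function.Periodic x (2 ^ (k + 1)) := by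
  refine periodic_of_hasOffset_of_alternating (hasOffset_of_hasOffset_succ h₁) fun n => ?_
  obtain ⟨q, rfl | rfl⟩ := n.even_or_odd'
  · have h := apply_add_two_pow_of_hasOffset_succ h₁ q
    rwa [show -(r : ℤ) + q * 2 ^ (k + 1) = -r + 2 * q * 2 ^ k by ring, add_assoc,
      ← add_one_mul] at h
  · have h := apply_add_two_pow_of_hasOffset_succ h₂ (q + 1)
    rwa [show -((r + 2 ^ k : ℕ) : ℤ) + (q + 1) * 2 ^ (k + 1) = -r + (2 * q + 1) * 2 ^ k by
      push_cast; ring, add_assoc, ← add_one_mul] at h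

lemma not_periodic_two_pow (hx : x ∈ morseShiftX) (k : ℕ) : ¬Function.Periodic x (2 ^ k) := by
  intro hper
  obtain ⟨s, hs⟩ := hx 0 (2 ^ (k + 1) + 2 ^ k)
  obtain ⟨t, ht, hne⟩ := exists_morse_add_two_pow_ne k s
  apply hne
  rw [← hs t (by omega), add_assoc, ← hs (t + 2 ^ k) (by omega)]
  push_cast
  rw [← add_assoc, hper]

lemma hasOffset_unique (hx : x ∈ morseShiftX) {i i' : ℕ} (hi : i < 2 ^ k) (hi' : i' < 2 ^ k)
    (h : hasOffset k x i) (h' : hasOffset k x i') : i = i' := by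
  induction k generalizing i i' with
  | zero => omega
  | succ k ih =>
    have hmod : i % 2 ^ k = i' % 2 ^ k :=
      ih (Nat.mod_lt _ (Nat.two_pow_pos k)) (Nat.mod_lt _ (Nat.two_pow_pos k))
        (hasOffset_mod_two_pow.2 (hasOffset_of_hasOffset_succ h))
        (hasOffset_mod_two_pow.2 (hasOffset_of_hasOffset_succ h'))
    have key (r : ℕ) (h₁ : hasOffset (k + 1) x r) : ¬hasOffset (k + 1) x (r + 2 ^ k) := fun h₂ =>
      not_periodic_two_pow hx (k + 1) (periodic_of_hasOffset_succ_of_hasOffset_succ_add h₁ h₂)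
    rw [pow_succ'] at hi hi'
    rcases eq_mod_or_eq_mod_add_of_lt_two_mul hi with e | e <;>
      rcases eq_mod_or_eq_mod_add_of_lt_two_mul hi' with e' | e'
    · omega
    · rw [e, hmod] at h; rw [e'] at h'; exact (key _ h h').elim
    · rw [e] at h; rw [e', ← hmod] at h'; exact (key _ h' h).elim
    · omega

lemma exists_hasOffset (hx : x ∈ morseShiftX) (k : ℕ) : ∃ i < 2 ^ k, hasOffset k x i := by
  choose s hs using fun N : ℕ => hx (-(N * 2 ^ k : ℕ)) (2 * N * 2 ^ k)
  obtain ⟨i, hi⟩ := Finite.exists_infinite_fiber fun N =>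
    (⟨s N % 2 ^ k, Nat.mod_lt _ (Nat.two_pow_pos k)⟩ : Fin (2 ^ k))
  refine ⟨i, i.isLt, hasOffset_iff.2 fun m => ?_⟩
  obtain ⟨N, hN, hmN⟩ := (Set.infinite_coe_iff.1 hi).exists_gt m.natAbs
  obtain ⟨q, hq⟩ : ∃ q, i + 2 ^ k * q = s N :=
    ⟨s N / 2 ^ k, by rw [← congrArg Fin.val hN]; exact Nat.mod_add_div _ _⟩
  obtain ⟨M, hM⟩ : ∃ M : ℕ, (M : ℤ) = N + m - 1 := ⟨(N + m - 1).toNat, by omega⟩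
  have hiM : (i : ℕ) ≤ (M + 1) * 2 ^ k := i.isLt.le.trans (Nat.le_mul_of_pos_left _ M.succ_pos)
  -- the block at `-i + m * 2 ^ k` is the block of `morse` at `(q + M + 1) * 2 ^ k`
  have hl : (M + 1) * 2 ^ k - i + 2 ^ k ≤ 2 * N * 2 ^ k :=
    calc (M + 1) * 2 ^ k - i + 2 ^ k ≤ (M + 1) * 2 ^ k + 2 ^ k := by omega
      _ = (M + 2) * 2 ^ k := by ring
      _ ≤ 2 * N * 2 ^ k := Nat.mul_le_mul_right _ (by omega)
  have hb := readsBlock_of_eqOn_morse (hs N) (n := q + M + 1)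
    (by zify [hiM] at hq ⊢; linear_combination -hq) hl
  refine ⟨morse (q + M + 1), ?_⟩
  convert hb using 1
  push_cast [hiM]
  linear_combination -(2 ^ k : ℤ) * hM

end Offset

local notation "𝕏" => {x : ℤ → Bool // x ∈ morseShiftX}

lemma cyl_eq {k i : ℕ} (b : Bool) (hi : i < 2 ^ k) :
    cyl k b i = {x | hasOffset k x.val i ∧ x.val 0 = xor b (morse i)} := by
  simp only [cyl, getD_cond_uWord b hi]

open MeasureTheory

lemma measurableSet_cyl (k : ℕ) (b : Bool) (i : ℕ) : MeasurableSet (cyl k b i) := by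
  have hcoord (n : ℤ) (c : Bool) : Measurable fun x : 𝕏 => x.val n = c :=
    Measurable.eq_const (f := fun x : 𝕏 => x.val n)
      ((measurable_pi_apply n).comp measurable_subtype_coe) c
  refine Measurable.setOf (.and (.forall fun m => .or ?_ ?_) (hcoord 0 _)) <;>
    exact .forall fun j => .imp measurable_const (hcoord _ _)

lemma hasOffset_iff_hasOffset_succ {x : ℤ → Bool} (hx : x ∈ morseShiftX) {k i : ℕ}
    (hi : i < 2 ^ k) :
    hasOffset k x i ↔ hasOffset (k + 1) x i ∨ hasOffset (k + 1) x (i + 2 ^ k) := by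
  refine ⟨fun h => ?_, ?_⟩
  · obtain ⟨i₁, hi₁, h₁⟩ := exists_hasOffset hx (k + 1)
    have hmod : i₁ % 2 ^ k = i := hasOffset_unique hx (Nat.mod_lt _ (Nat.two_pow_pos k)) hi
      (hasOffset_mod_two_pow.2 (hasOffset_of_hasOffset_succ h₁)) h
    rw [pow_succ'] at hi₁
    rcases eq_mod_or_eq_mod_add_of_lt_two_mul hi₁ with e | e <;> rw [e, hmod] at h₁
    exacts [.inl h₁, .inr h₁]
  · rintro (h | h)
    · exact hasOffset_of_hasOffset_succ h
    · have := hasOffset_of_hasOffset_succ h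
      rwa [← one_mul (2 ^ k), hasOffset_add_mul_two_pow] at this

lemma cyl_eq_union_cyl_succ {k i : ℕ} (hi : i < 2 ^ k) (b : Bool) :
    cyl k b i = cyl (k + 1) b i ∪ cyl (k + 1) (!b) (i + 2 ^ k) := by
  have hi' : i + 2 ^ k < 2 ^ (k + 1) := by rw [pow_succ]; omega
  ext x
  rw [cyl_eq _ hi, cyl_eq _ (by omega), cyl_eq _ hi', add_comm i, morse_two_pow_add hi,
    Bool.not_xor_not]
  simp only [Set.mem_union, Set.mem_ofPred_eq, hasOffset_iff_hasOffset_succ x.2 hi, add_comm i,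
    or_and_right]

lemma disjoint_cyl {k i i' : ℕ} {b b' : Bool} (hi : i < 2 ^ k) (hi' : i' < 2 ^ k)
    (hne : (i, b) ≠ (i', b')) : Disjoint (cyl k b i) (cyl k b' i') := by
  rw [cyl_eq b hi, cyl_eq b' hi', Set.disjoint_left]
  rintro x ⟨h, h0⟩ ⟨h', h0'⟩
  obtain rfl := hasOffset_unique x.2 hi hi' h h'
  rw [h0, Bool.xor_left_inj] at h0'
  exact hne (by rw [h0'])

lemma iUnion_cyl (k : ℕ) :
    ⋃ p ∈ (Finset.range (2 ^ k) ×ˢ Finset.univ : Finset (ℕ × Bool)), cyl k p.2 p.1 =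
      Set.univ := by
  refine Set.eq_univ_of_forall fun x => ?_
  obtain ⟨i, hi, h⟩ := exists_hasOffset x.2 k
  refine Set.mem_biUnion (x := (i, xor (x.val 0) (morse i)))
    (Finset.mem_product.2 ⟨Finset.mem_range.2 hi, Finset.mem_univ _⟩) ?_
  rw [cyl_eq _ hi]
  exact ⟨h, by rw [Bool.xor_assoc, Bool.xor_self, Bool.xor_false]⟩

lemma preimage_cyl_succ {T : 𝕏 → 𝕏} (hT : ∀ x, (T x).val = shiftT x.val) {k i : ℕ}
    (hi : i + 1 < 2 ^ k) (b : Bool) : T ⁻¹' cyl k b (i + 1) = cyl k b i := by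
  ext x
  simp only [Set.mem_preimage, cyl_eq _ hi, cyl_eq _ (i.lt_succ_self.trans hi),
    Set.mem_ofPred_eq, hT, hasOffset_shiftT_iff]
  refine and_congr_right fun h => ?_
  obtain ⟨c, hc⟩ := hasOffset_iff.1 h 0
  have h0 : x.val 0 = xor c (morse i) := by simpa using hc i (by omega)
  have h1 : x.val 1 = xor c (morse (i + 1)) := by simpa using hc (i + 1) hi
  rw [shiftT, zero_add, h0, h1, Bool.xor_left_inj, Bool.xor_left_inj]

section Invariant

variable {μ : Measure 𝕏} {T : 𝕏 → 𝕏}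

lemma measure_cyl_eq_measure_cyl_zero (hT : ∀ x, (T x).val = shiftT x.val)
    (hμ : ∀ s, MeasurableSet s → μ (T ⁻¹' s) = μ s) {k i : ℕ} (b : Bool) (hi : i < 2 ^ k) :
    μ (cyl k b i) = μ (cyl k b 0) := by
  induction i with
  | zero => rfl
  | succ i ih =>
    rw [← hμ _ (measurableSet_cyl k b (i + 1)), preimage_cyl_succ hT hi b,
      ih (Nat.lt_of_succ_lt hi)]

lemma measure_cyl_zero_eq_add (hT : ∀ x, (T x).val = shiftT x.val)
    (hμ : ∀ s, MeasurableSet s → μ (T ⁻¹' s) = μ s) (k : ℕ) (b : Bool) :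
    μ (cyl k b 0) = μ (cyl (k + 1) b 0) + μ (cyl (k + 1) (!b) 0) := by
  have h : 0 + 2 ^ k < 2 ^ (k + 1) := by rw [zero_add]; exact Nat.pow_lt_pow_succ one_lt_two
  rw [cyl_eq_union_cyl_succ (Nat.two_pow_pos k) b,
    measure_union (disjoint_cyl (Nat.two_pow_pos _) h (by simp)) (measurableSet_cyl _ _ _),
    measure_cyl_eq_measure_cyl_zero hT hμ (!b) h]

lemma measure_cyl_eq_measure_cyl_false_zero (hT : ∀ x, (T x).val = shiftT x.val)
    (hμ : ∀ s, MeasurableSet s → μ (T ⁻¹' s) = μ s) {k i : ℕ} (b : Bool) (hi : i < 2 ^ k) :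
    μ (cyl k b i) = μ (cyl k false 0) := by
  rw [measure_cyl_eq_measure_cyl_zero hT hμ b hi]
  cases b
  · rfl
  · rw [measure_cyl_zero_eq_add hT hμ k false, measure_cyl_zero_eq_add hT hμ k true,
      Bool.not_false, Bool.not_true, add_comm]

lemma measure_cyl_false_zero [IsProbabilityMeasure μ] (hT : ∀ x, (T x).val = shiftT x.val)
    (hμ : ∀ s, MeasurableSet s → μ (T ⁻¹' s) = μ s) (k : ℕ) :
    μ (cyl k false 0) = (2 ^ (k + 1) : ENNReal)⁻¹ := by
  have hdisj : Set.PairwiseDisjoint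
      (↑(Finset.range (2 ^ k) ×ˢ (Finset.univ : Finset Bool)) : Set (ℕ × Bool))
      fun p => cyl k p.2 p.1 := by
    rintro ⟨i, b⟩ hp ⟨i', b'⟩ hp' hne
    simp only [Finset.coe_product, Finset.coe_range, Finset.coe_univ, Set.mem_prod,
      Set.mem_Iio, Set.mem_univ, and_true] at hp hp'
    exact disjoint_cyl hp hp' hne
  have hsum := measure_biUnion_finset (μ := μ) hdisj fun p _ => measurableSet_cyl k p.2 p.1
  rw [iUnion_cyl, measure_univ, Finset.sum_congr rfl fun p hp =>
      measure_cyl_eq_measure_cyl_false_zero hT hμ p.2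
        (Finset.mem_range.1 (Finset.mem_product.1 hp).1),
    Finset.sum_const, Finset.card_product, Finset.card_range, Finset.card_univ, Fintype.card_bool,
    nsmul_eq_mul] at hsum
  refine ENNReal.eq_inv_of_mul_eq_one_left ?_
  rw [hsum, mul_comm]
  push_cast
  ring

end Invariant

/-- Every shift-invariant Borel probability measure on X gives each of the 2^{k+1}
k-canonical cylinders measure 2^{-(k+1)}. -/
theorem morse_cylinders_measure
    (μ : Measure {x : ℤ → Bool // x ∈ morseShiftX}) [IsProbabilityMeasure μ]
    (T : {x : ℤ → Bool // x ∈ morseShiftX} → {x : ℤ → Bool // x ∈ morseShiftX})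
    (hT : ∀ x, (T x).val = shiftT x.val)
    (hμ : ∀ s : Set {x : ℤ → Bool // x ∈ morseShiftX},
      MeasurableSet s → μ (T ⁻¹' s) = μ s)
    (k i : ℕ) (hi : i < 2 ^ k) :
    μ (cyl k false i) = (2 ^ (k + 1) : ENNReal)⁻¹ ∧
    μ (cyl k true i) = (2 ^ (k + 1) : ENNReal)⁻¹ := by
  simp only [measure_cyl_eq_measure_cyl_false_zero hT hμ _ hi, measure_cyl_false_zero hT hμ k,
    and_self]
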